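/- Fix x₀ > 0 and set p₀₁ = (1/(aυ))·exp(−x₀ − 2υ·e^{x₀}). Then p·∂²φ/∂x²(x,p) ≤ 1/a for all x ≤ x₀ and all p with 0 < p ≤ p₀₁. -/

import Mathlib

/-- The function `φ(x,p) = ln Σ_{n≥0} (υⁿ/n!)·exp(xn − (ap/2)n²)`. -/
noncomputable def phi (υ a x p : ℝ) : ℝ :=
  Real.log (∑' n : ℕ, (υ ^ n / (Nat.factorial n : ℝ)) *
    Real.exp (x * n - (a * p / 2) * (n : ℝ) ^ 2))

/-!
`∂²φ/∂x²` is the variance of `n` under the weights `υⁿ/n! · exp(xn − (ap/2)n²)`, so it is at most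
their second moment divided by the partition function, and the partition function is at least `1`
(its `n = 0` term). Dropping the repulsion and using `x ≤ x₀`, the second moment is at most
`Σ n² yⁿ/n! ≤ y·e^{2y}` (as `n + 1 ≤ 2ⁿ`) with `y = υ·e^{x₀}`, and `p₀₁` is exactly `1/(a·y·e^{2y})`.
-/

open Real

noncomputable def partitionTerm (υ c : ℝ) (k n : ℕ) (x : ℝ) : ℝ :=
  (n : ℝ) ^ k * (υ ^ n / (n.factorial : ℝ) * exp (x * n - c * (n : ℝ) ^ 2))

noncomputable def partitionMoment (υ c : ℝ) (k : ℕ) (x : ℝ) : ℝ :=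
  ∑' n : ℕ, partitionTerm υ c k n x

section

variable {υ c : ℝ}

lemma partitionTerm_nonneg (hυ : 0 ≤ υ) (c : ℝ) (k n : ℕ) (x : ℝ) :
    0 ≤ partitionTerm υ c k n x := by
  unfold partitionTerm
  positivity

lemma hasDerivAt_partitionTerm (υ c : ℝ) (k n : ℕ) (x : ℝ) :
    HasDerivAt (partitionTerm υ c k n) (partitionTerm υ c (k + 1) n x) x := by
  have hexp : HasDerivAt (fun y : ℝ => exp (y * n - c * (n : ℝ) ^ 2))
      (exp (x * n - c * (n : ℝ) ^ 2) * n) x :=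
    (((hasDerivAt_id x).mul_const (n : ℝ)).sub_const _).exp.congr_deriv (by simp)
  exact ((hexp.const_mul (υ ^ n / (n.factorial : ℝ))).const_mul ((n : ℝ) ^ k)).congr_deriv
    (by unfold partitionTerm; ring)

lemma partitionTerm_le (hυ : 0 ≤ υ) (hc : 0 ≤ c) (k n : ℕ) {x R : ℝ} (hxR : x ≤ R) :
    partitionTerm υ c k n x ≤ (n : ℝ) ^ k * ((υ * exp R) ^ n / (n.factorial : ℝ)) := by
  have hexp : exp (x * n - c * (n : ℝ) ^ 2) ≤ exp R ^ n := by
    rw [← exp_nat_mul, exp_le_exp]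
    nlinarith [mul_le_mul_of_nonneg_right hxR (Nat.cast_nonneg n : (0 : ℝ) ≤ n),
      mul_nonneg hc (sq_nonneg (n : ℝ))]
  calc partitionTerm υ c k n x
      ≤ (n : ℝ) ^ k * (υ ^ n / (n.factorial : ℝ) * exp R ^ n) := by
        unfold partitionTerm
        gcongr
    _ = (n : ℝ) ^ k * ((υ * exp R) ^ n / (n.factorial : ℝ)) := by ring

lemma natCast_pow_mul_pow_div_factorial_le {y : ℝ} (hy : 0 ≤ y) (k n : ℕ) :
    (n : ℝ) ^ k * (y ^ n / (n.factorial : ℝ)) ≤ (2 ^ k * y) ^ n / (n.factorial : ℝ) := by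
  have hn : (n : ℝ) ^ k ≤ (2 ^ k) ^ n := by
    rw [← pow_mul, mul_comm, pow_mul]
    gcongr
    exact_mod_cast Nat.lt_two_pow_self.le
  calc (n : ℝ) ^ k * (y ^ n / (n.factorial : ℝ)) ≤ (2 ^ k) ^ n * (y ^ n / (n.factorial : ℝ)) := by
        gcongr
    _ = (2 ^ k * y) ^ n / (n.factorial : ℝ) := by ring

lemma summable_natCast_pow_mul_pow_div_factorial {y : ℝ} (hy : 0 ≤ y) (k : ℕ) :
    Summable fun n : ℕ => (n : ℝ) ^ k * (y ^ n / (n.factorial : ℝ)) :=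
  (summable_pow_div_factorial (2 ^ k * y)).of_nonneg_of_le (fun _ => by positivity)
    (natCast_pow_mul_pow_div_factorial_le hy k)

lemma summable_partitionTerm (hυ : 0 ≤ υ) (hc : 0 ≤ c) (k : ℕ) (x : ℝ) :
    Summable fun n => partitionTerm υ c k n x :=
  (summable_natCast_pow_mul_pow_div_factorial (by positivity) k).of_nonneg_of_le
    (partitionTerm_nonneg hυ c k · x) (partitionTerm_le hυ hc k · le_rfl)

lemma hasDerivAt_partitionMoment (hυ : 0 ≤ υ) (hc : 0 ≤ c) (k : ℕ) (x : ℝ) :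
    HasDerivAt (partitionMoment υ c k) (partitionMoment υ c (k + 1) x) x := by
  have hx : x ∈ Set.Iio (x + 1) := by simp
  refine hasDerivAt_tsum_of_isPreconnected
    (summable_natCast_pow_mul_pow_div_factorial (by positivity : 0 ≤ υ * exp (x + 1)) (k + 1))
    isOpen_Iio isPreconnected_Iio (fun n y _ => hasDerivAt_partitionTerm υ c k n y)
    (fun n y hy => ?_) hx (summable_partitionTerm hυ hc k x) hx
  rw [norm_of_nonneg (partitionTerm_nonneg hυ c _ n y)]
  exact partitionTerm_le hυ hc (k + 1) n (le_of_lt hy)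

lemma one_le_partitionMoment_zero (hυ : 0 ≤ υ) (hc : 0 ≤ c) (x : ℝ) :
    1 ≤ partitionMoment υ c 0 x := by
  simpa [partitionMoment, partitionTerm] using (summable_partitionTerm hυ hc 0 x).le_tsum 0
    (fun n _ => partitionTerm_nonneg hυ c 0 n x)

lemma deriv_deriv_log_partitionMoment_le (hυ : 0 ≤ υ) (hc : 0 ≤ c) (x : ℝ) :
    deriv (deriv fun y => log (partitionMoment υ c 0 y)) x ≤ partitionMoment υ c 2 x := by
  have hZ : ∀ y, 0 < partitionMoment υ c 0 y :=
    fun y => one_pos.trans_le (one_le_partitionMoment_zero hυ hc y)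
  have hlog : deriv (fun y => log (partitionMoment υ c 0 y)) =
      fun y => partitionMoment υ c 1 y / partitionMoment υ c 0 y :=
    funext fun y => ((hasDerivAt_partitionMoment hυ hc 0 y).log (hZ y).ne').deriv
  have hquot : HasDerivAt (fun y => partitionMoment υ c 1 y / partitionMoment υ c 0 y)
      ((partitionMoment υ c 2 x * partitionMoment υ c 0 x -
        partitionMoment υ c 1 x * partitionMoment υ c 1 x) / partitionMoment υ c 0 x ^ 2) x :=
    (hasDerivAt_partitionMoment hυ hc 1 x).div (hasDerivAt_partitionMoment hυ hc 0 x) (hZ x).ne'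
  rw [hlog, hquot.deriv, div_le_iff₀ (pow_pos (hZ x) 2)]
  have h1 := one_le_partitionMoment_zero hυ hc x
  have h2 : 0 ≤ partitionMoment υ c 2 x := tsum_nonneg (partitionTerm_nonneg hυ c 2 · x)
  nlinarith [sq_nonneg (partitionMoment υ c 1 x), mul_nonneg (mul_nonneg h2 (hZ x).le) (sub_nonneg.2 h1)]

lemma tsum_sq_mul_pow_div_factorial_le {y : ℝ} (hy : 0 ≤ y) :
    ∑' n : ℕ, (n : ℝ) ^ 2 * (y ^ n / (n.factorial : ℝ)) ≤ y * exp (2 * y) := by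
  have hexp : HasSum (fun n : ℕ => y * ((2 * y) ^ n / (n.factorial : ℝ))) (y * exp (2 * y)) :=
    (exp_eq_exp_ℝ ▸ NormedSpace.expSeries_div_hasSum_exp (2 * y)).mul_left y
  have hsucc : ∀ n : ℕ, ((n + 1 : ℕ) : ℝ) ^ 2 * (y ^ (n + 1) / ((n + 1).factorial : ℝ)) ≤
      y * ((2 * y) ^ n / (n.factorial : ℝ)) := by
    intro n
    have h2n : (n : ℝ) + 1 ≤ 2 ^ n := by exact_mod_cast Nat.lt_two_pow_self
    calc ((n + 1 : ℕ) : ℝ) ^ 2 * (y ^ (n + 1) / ((n + 1).factorial : ℝ))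
        = ((n : ℝ) + 1) * (y * (y ^ n / (n.factorial : ℝ))) := by
          push_cast [Nat.factorial_succ]
          field_simp
          ring
      _ ≤ 2 ^ n * (y * (y ^ n / (n.factorial : ℝ))) := by gcongr
      _ = y * ((2 * y) ^ n / (n.factorial : ℝ)) := by ring
  have hs := summable_natCast_pow_mul_pow_div_factorial hy 2
  rw [hs.tsum_eq_zero_add, ← hexp.tsum_eq]
  simpa using ((summable_nat_add_iff 1).2 hs).tsum_le_tsum hsucc hexp.summable
  
lemma partitionMoment_two_le (hυ : 0 ≤ υ) (hc : 0 ≤ c) {x x₀ : ℝ} (hx : x ≤ x₀) :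
    partitionMoment υ c 2 x ≤ υ * exp x₀ * exp (2 * (υ * exp x₀)) :=
  ((summable_partitionTerm hυ hc 2 x).tsum_le_tsum (partitionTerm_le hυ hc 2 · hx)
    (summable_natCast_pow_mul_pow_div_factorial (by positivity) 2)).trans
    (tsum_sq_mul_pow_div_factorial_le (by positivity))

end

theorem stmt_17_general (υ a : ℝ) (hυ : 0 < υ) (ha : 1 < a) (x₀ : ℝ) :
    ∀ x ≤ x₀, ∀ p : ℝ, 0 < p →
      p ≤ (1 / (a * υ)) * Real.exp (-x₀ - 2 * υ * Real.exp x₀) →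
      p * deriv (deriv (fun x' => phi υ a x' p)) x ≤ 1 / a := by
  intro x hx p hp hple
  have hc : 0 ≤ a * p / 2 := by positivity
  have hphi : (fun x' => phi υ a x' p) = fun y => log (partitionMoment υ (a * p / 2) 0 y) := by
    funext y
    simp [phi, partitionMoment, partitionTerm]
  have hp_le : p * (υ * exp x₀ * exp (2 * (υ * exp x₀))) ≤ 1 / a := calc
    p * (υ * exp x₀ * exp (2 * (υ * exp x₀)))
        ≤ 1 / (a * υ) * exp (-x₀ - 2 * υ * exp x₀) * (υ * exp x₀ * exp (2 * (υ * exp x₀))) := by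
      gcongr
    _ = 1 / a := by
      rw [show -x₀ - 2 * υ * exp x₀ = -(x₀ + 2 * (υ * exp x₀)) by ring, exp_neg, exp_add]
      field_simp
  calc p * deriv (deriv (fun x' => phi υ a x' p)) x
      ≤ p * partitionMoment υ (a * p / 2) 2 x := by
        rw [hphi]
        gcongr
        exact deriv_deriv_log_partitionMoment_le hυ.le hc x
    _ ≤ p * (υ * exp x₀ * exp (2 * (υ * exp x₀))) := by
        gcongr
        exact partitionMoment_two_le hυ.le hc hx
    _ ≤ 1 / a := hp_le

theorem stmt_17 (υ a : ℝ) (hυ : 0 < υ) (ha : 1 < a) (x₀ : ℝ) (hx₀ : 0 < x₀) :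
    ∀ x ≤ x₀, ∀ p : ℝ, 0 < p →
      p ≤ (1 / (a * υ)) * Real.exp (-x₀ - 2 * υ * Real.exp x₀) →
      p * deriv (deriv (fun x' => phi υ a x' p)) x ≤ 1 / a :=
  stmt_17_general υ a hυ ha x₀
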